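/- arXiv:1207.2508 — 2 statements merged into one kernel-verified Lean document; each statement's English description precedes it below -/
import Mathlib

section
/- Let (w_i) be a sequence of positive integers tending to infinity and (μ_i) a sequence of reals greater than 1 tending to 1. For each i, let t_{i,1}, t_{i,2} ∈ (0,1) satisfy t_{i,η}/(1 − t_{i,η}) ∈ [μ_i^{−w_i}, μ_i^{w_i}] for η ∈ {1,2}. Then for every ε > 0 there exists i₀ such that for every i ≥ i₀ there exist C¹ diffeomorphisms H_{i,0}, …, H_{i,w_i−1} of [0,1], each ε-C¹-close to the identity, such that H_{i,w_i−1} ∘ ⋯ ∘ H_{i,0}(t_{i,1}) = t_{i,2}. -/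
open Set Filter
structure IsIntervalDiffeo (h : ℝ → ℝ) (u v : ℝ) : Prop where
  contDiffOn : ContDiffOn ℝ 1 h (Set.Icc u v)
  fix_left : h u = u
  fix_right : h v = v
  mono : StrictMonoOn h (Set.Icc u v)
  deriv_pos : ∀ w ∈ Set.Icc u v, 0 < derivWithin h (Set.Icc u v) w

/-- The `C¹` distance from a diffeomorphism of `[0,1]` to the identity. -/
noncomputable def distId (g : ℝ → ℝ) : ℝ :=
  (⨆ x : Set.Icc (0:ℝ) 1, |g x.1 - x.1|) +
    (⨆ x : Set.Icc (0:ℝ) 1, |derivWithin g (Set.Icc (0:ℝ) 1) x.1 - 1|)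

/-- `compN H k = H (k-1) ∘ ⋯ ∘ H 1 ∘ H 0`. -/
def compN (H : ℕ → ℝ → ℝ) : ℕ → ℝ → ℝ
  | 0 => id
  | (k + 1) => H k ∘ compN H k

/-!
The Möbius map `x ↦ l x / (1 + (l - 1) x)` is a diffeomorphism of `[0,1]` that multiplies the
odds `x / (1 - x)` by `l`, and it is `O(|l - 1|)`-`C¹`-close to the identity. The hypotheses put
the quotient of the two odds in `[μ⁻²ʷ, μ²ʷ]`, so its `w`-th root `l` lies between `μ⁻²` and `μ²`,
and `w` copies of the map with this `l` carry `t₁` to `t₂`.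
-/

noncomputable def odds (x : ℝ) : ℝ := x / (1 - x)

noncomputable def oddsScaling (l x : ℝ) : ℝ := l * x / (1 + (l - 1) * x)

lemma compN_const (f : ℝ → ℝ) (k : ℕ) : compN (fun _ => f) k = f^[k] := by
  induction k with
  | zero => rfl
  | succ k ih => rw [compN, ih, Function.iterate_succ']

lemma odds_injOn : InjOn odds (Ioo 0 1) := by
  intro a ha b hb hab
  have ha' : 1 - a ≠ 0 := by linarith [ha.2]
  have hb' : 1 - b ≠ 0 := by linarith [hb.2]
  unfold odds at hab
  field_simp at hab
  linarith

section oddsScaling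

variable {l x : ℝ}

lemma oddsScaling_denom_pos (hl : 0 < l) (hx : x ∈ Icc (0 : ℝ) 1) : 0 < 1 + (l - 1) * x := by
  nlinarith [mul_nonneg hx.1 hl.le, hx.2]

lemma half_le_oddsScaling_denom (hl : |l - 1| ≤ 1 / 2) (hx : x ∈ Icc (0 : ℝ) 1) :
    1 / 2 ≤ 1 + (l - 1) * x := by
  have : |(l - 1) * x| ≤ 1 / 2 := by
    rw [abs_mul, abs_of_nonneg hx.1]
    nlinarith [abs_nonneg (l - 1), hx.2]
  linarith [neg_abs_le ((l - 1) * x)]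

lemma hasDerivAt_oddsScaling (hx : 1 + (l - 1) * x ≠ 0) :
    HasDerivAt (oddsScaling l) (l / (1 + (l - 1) * x) ^ 2) x := by
  have hnum : HasDerivAt (fun x : ℝ => l * x) l x := by
    simpa using (hasDerivAt_id x).const_mul l
  have hden : HasDerivAt (fun x : ℝ => 1 + (l - 1) * x) (l - 1) x := by
    simpa using ((hasDerivAt_id x).const_mul (l - 1)).const_add 1
  exact (hnum.div hden hx).congr_deriv (by ring)

lemma derivWithin_oddsScaling (hl : 0 < l) (hx : x ∈ Icc (0 : ℝ) 1) :
    derivWithin (oddsScaling l) (Icc 0 1) x = l / (1 + (l - 1) * x) ^ 2 :=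
  (hasDerivAt_oddsScaling (oddsScaling_denom_pos hl hx).ne').hasDerivWithinAt.derivWithin
    (uniqueDiffOn_Icc one_pos x hx)

lemma isIntervalDiffeo_oddsScaling (hl : 0 < l) : IsIntervalDiffeo (oddsScaling l) 0 1 where
  contDiffOn := by
    refine ContDiffOn.div (by fun_prop) (by fun_prop) fun x hx => ?_
    exact (oddsScaling_denom_pos hl hx).ne'
  fix_left := by simp [oddsScaling]
  fix_right := by simp [oddsScaling, hl.ne']
  mono := by
    intro a ha b hb hab
    rw [oddsScaling, oddsScaling,
      div_lt_div_iff₀ (oddsScaling_denom_pos hl ha) (oddsScaling_denom_pos hl hb)]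
    nlinarith
  deriv_pos := fun x hx => by
    rw [derivWithin_oddsScaling hl hx]
    have := oddsScaling_denom_pos hl hx
    positivity

lemma mapsTo_oddsScaling (hl : 0 < l) : MapsTo (oddsScaling l) (Ioo 0 1) (Ioo 0 1) := by
  intro x hx
  have hD := oddsScaling_denom_pos hl (Ioo_subset_Icc_self hx)
  rw [mem_Ioo, oddsScaling, lt_div_iff₀ hD, div_lt_one hD]
  constructor <;> nlinarith [hx.1, hx.2]

lemma odds_oddsScaling (hl : 0 < l) (hx : x ∈ Ioo (0 : ℝ) 1) :
    odds (oddsScaling l x) = l * odds x := by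
  have hD := oddsScaling_denom_pos hl (Ioo_subset_Icc_self hx)
  have h1 : 1 - oddsScaling l x = (1 - x) / (1 + (l - 1) * x) := by
    rw [oddsScaling, eq_div_iff hD.ne', sub_mul, div_mul_cancel₀ _ hD.ne']
    ring
  rw [odds, odds, h1, oddsScaling, div_div_div_cancel_right₀ hD.ne']
  ring

lemma odds_iterate_oddsScaling (hl : 0 < l) (hx : x ∈ Ioo (0 : ℝ) 1) (k : ℕ) :
    odds ((oddsScaling l)^[k] x) = l ^ k * odds x := by
  induction k with
  | zero => simp
  | succ k ih =>
    rw [Function.iterate_succ_apply',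
      odds_oddsScaling hl ((mapsTo_oddsScaling hl).iterate k hx), ih, pow_succ']
    ring

lemma abs_oddsScaling_sub_le (hl : |l - 1| ≤ 1 / 2) (hx : x ∈ Icc (0 : ℝ) 1) :
    |oddsScaling l x - x| ≤ 2 * |l - 1| := by
  have hD := half_le_oddsScaling_denom hl hx
  have h1x : |x * (1 - x)| ≤ 1 := by
    rw [abs_of_nonneg (mul_nonneg hx.1 (by linarith [hx.2]))]
    nlinarith [hx.1, hx.2]
  have key : oddsScaling l x - x = (l - 1) * (x * (1 - x)) / (1 + (l - 1) * x) := by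
    have : 1 + (l - 1) * x ≠ 0 := by linarith
    rw [oddsScaling, eq_div_iff this, sub_mul, div_mul_cancel₀ _ this]
    ring
  rw [key, abs_div, abs_of_pos (show 0 < 1 + (l - 1) * x by linarith),
    div_le_iff₀ (by linarith), abs_mul]
  nlinarith [abs_nonneg (l - 1), abs_nonneg (x * (1 - x))]

lemma abs_derivWithin_oddsScaling_sub_one_le (hl : |l - 1| ≤ 1 / 2) (hx : x ∈ Icc (0 : ℝ) 1) :
    |derivWithin (oddsScaling l) (Icc 0 1) x - 1| ≤ 6 * |l - 1| := by
  have hD := half_le_oddsScaling_denom hl hx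
  have hl0 : 0 < l := by linarith [neg_abs_le (l - 1)]
  have hnum : |l - (1 + (l - 1) * x) ^ 2| ≤ 3 / 2 * |l - 1| := by
    have h12x : |1 - 2 * x| ≤ 1 := abs_le.mpr ⟨by linarith [hx.2], by linarith [hx.1]⟩
    have hx2 : |x ^ 2| ≤ 1 := by
      rw [abs_of_nonneg (sq_nonneg x)]; nlinarith [hx.1, hx.2]
    calc |l - (1 + (l - 1) * x) ^ 2| = |(l - 1) * (1 - 2 * x) - (l - 1) ^ 2 * x ^ 2| := by
          congr 1; ring
      _ ≤ |l - 1| * |1 - 2 * x| + |l - 1| ^ 2 * |x ^ 2| := by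
          refine (abs_sub _ _).trans_eq ?_
          rw [abs_mul, abs_mul, abs_pow]
      _ ≤ 3 / 2 * |l - 1| := by
          nlinarith [abs_nonneg (l - 1), abs_nonneg (1 - 2 * x), abs_nonneg (x ^ 2)]
  have key : l / (1 + (l - 1) * x) ^ 2 - 1
      = (l - (1 + (l - 1) * x) ^ 2) / (1 + (l - 1) * x) ^ 2 := by
    rw [sub_div, div_self (by positivity)]
  have hD2 : 1 / 4 ≤ (1 + (l - 1) * x) ^ 2 := by nlinarith
  rw [derivWithin_oddsScaling hl0 hx, key, abs_div,
    abs_of_pos (show 0 < (1 + (l - 1) * x) ^ 2 by linarith),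
    div_le_iff₀ (by linarith)]
  nlinarith [abs_nonneg (l - 1)]

lemma distId_oddsScaling_le (hl : |l - 1| ≤ 1 / 2) : distId (oddsScaling l) ≤ 8 * |l - 1| := by
  have : Nonempty (Icc (0 : ℝ) 1) := ⟨⟨0, left_mem_Icc.mpr zero_le_one⟩⟩
  have h₀ := ciSup_le fun x : Icc (0 : ℝ) 1 => abs_oddsScaling_sub_le hl x.2
  have h₁ := ciSup_le fun x : Icc (0 : ℝ) 1 => abs_derivWithin_oddsScaling_sub_one_le hl x.2
  rw [distId]
  linarith

end oddsScaling

lemma one_mem_uIcc_inv_self {a : ℝ} (ha : 0 < a) : (1 : ℝ) ∈ uIcc a⁻¹ a := by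
  rcases le_total 1 a with h | h
  · exact Icc_subset_uIcc ⟨inv_le_one_of_one_le₀ h, h⟩
  · exact Icc_subset_uIcc' ⟨h, (one_le_inv₀ ha).mpr h⟩

lemma exists_pow_mul_eq_of_mem_Icc_zpow {μ R₁ R₂ : ℝ} {w : ℕ} (hμ : 0 < μ)
    (h₁ : R₁ ∈ Icc (μ ^ (-(w : ℤ))) (μ ^ (w : ℤ))) (h₂ : R₂ ∈ Icc (μ ^ (-(w : ℤ))) (μ ^ (w : ℤ))) :
    ∃ l, 0 < l ∧ l ^ w * R₁ = R₂ ∧ l ∈ uIcc (μ ^ 2)⁻¹ (μ ^ 2) := by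
  rcases Nat.eq_zero_or_pos w with rfl | hw
  · simp only [CharP.cast_eq_zero, neg_zero, zpow_zero, Icc_self, mem_singleton_iff] at h₁ h₂
    exact ⟨1, one_pos, by simp [h₁, h₂], one_mem_uIcc_inv_self (by positivity)⟩
  simp only [zpow_neg, zpow_natCast] at h₁ h₂
  have hP : 0 < μ ^ w := pow_pos hμ w
  have hR₁ : 0 < R₁ := (inv_pos.mpr hP).trans_le h₁.1
  have hQ : 0 < R₂ / R₁ := div_pos ((inv_pos.mpr hP).trans_le h₂.1) hR₁
  set l := (R₂ / R₁) ^ (w⁻¹ : ℝ)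
  have hl : 0 < l := Real.rpow_pos_of_pos hQ _
  have hlw : l ^ w = R₂ / R₁ := Real.rpow_inv_natCast_pow hQ.le hw.ne'
  have hupper : l ^ w ≤ (μ ^ 2) ^ w := by
    calc l ^ w = R₂ / R₁ := hlw
      _ ≤ μ ^ w / (μ ^ w)⁻¹ := div_le_div₀ hP.le h₂.2 (inv_pos.mpr hP) h₁.1
      _ = (μ ^ 2) ^ w := by field_simp; ring
  have hlower : ((μ ^ 2)⁻¹) ^ w ≤ l ^ w := by
    calc ((μ ^ 2)⁻¹) ^ w = (μ ^ w)⁻¹ / μ ^ w := by rw [inv_pow, ← pow_mul, pow_mul']; ring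
      _ ≤ R₂ / R₁ := div_le_div₀ ((inv_pos.mpr hP).le.trans h₂.1) h₂.1 hR₁ h₁.2
      _ = l ^ w := hlw.symm
  refine ⟨l, hl, by rw [hlw, div_mul_cancel₀ _ hR₁.ne'], Icc_subset_uIcc ⟨?_, ?_⟩⟩
  · exact (pow_le_pow_iff_left₀ (by positivity) hl.le hw.ne').mp hlower
  · exact (pow_le_pow_iff_left₀ hl.le (by positivity) hw.ne').mp hupper

theorem move_ratio_by_small_perturbations_general
    (w : ℕ → ℕ)
    (μ : ℕ → ℝ) (hμ : Tendsto μ atTop (nhds 1))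
    (t₁ t₂ : ℕ → ℝ) (ht₁ : ∀ i : ℕ, t₁ i ∈ Set.Ioo (0:ℝ) 1)
    (ht₂ : ∀ i : ℕ, t₂ i ∈ Set.Ioo (0:ℝ) 1)
    (hr₁ : ∀ i : ℕ, t₁ i / (1 - t₁ i) ∈ Set.Icc (μ i ^ (-(w i : ℤ))) (μ i ^ (w i : ℤ)))
    (hr₂ : ∀ i : ℕ, t₂ i / (1 - t₂ i) ∈ Set.Icc (μ i ^ (-(w i : ℤ))) (μ i ^ (w i : ℤ)))
    (ε : ℝ) (hε : 0 < ε) :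
    ∃ i₀ : ℕ, ∀ i : ℕ, i₀ ≤ i → ∃ H : ℕ → ℝ → ℝ,
      (∀ j < w i, IsIntervalDiffeo (H j) 0 1) ∧
      (∀ j < w i, distId (H j) < ε) ∧
      compN H (w i) (t₁ i) = t₂ i := by
  set δ := min (1 / 2) (ε / 8)
  have hδ : 0 < δ := lt_min (by norm_num) (by positivity)
  have hI : Ioo (1 - δ) (1 + δ) ∈ nhds (1 : ℝ) := Ioo_mem_nhds (by linarith) (by linarith)
  have hμ₂ : Tendsto (fun i => μ i ^ 2) atTop (nhds 1) := by simpa using hμ.pow 2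
  have hμ₂' : Tendsto (fun i => (μ i ^ 2)⁻¹) atTop (nhds 1) := by
    simpa using hμ₂.inv₀ one_ne_zero
  obtain ⟨i₀, hi₀⟩ := eventually_atTop.mp
    ((hμ.eventually_const_lt one_pos).and ((hμ₂.eventually_mem hI).and (hμ₂'.eventually_mem hI)))
  refine ⟨i₀, fun i hi => ?_⟩
  obtain ⟨hμi, hsq, hsq'⟩ := hi₀ i hi
  obtain ⟨l, hl, hlw, hlμ⟩ := exists_pow_mul_eq_of_mem_Icc_zpow hμi (hr₁ i) (hr₂ i)
  have hl1 : |l - 1| < δ := by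
    have := ordConnected_Ioo.uIcc_subset hsq' hsq hlμ
    rw [abs_sub_lt_iff]
    constructor <;> linarith [this.1, this.2]
  refine ⟨fun _ => oddsScaling l, fun _ _ => isIntervalDiffeo_oddsScaling hl, fun _ _ => ?_, ?_⟩
  · have := distId_oddsScaling_le (hl1.le.trans (min_le_left _ _))
    linarith [min_le_right (1 / 2) (ε / 8)]
  · rw [compN_const]
    refine odds_injOn ((mapsTo_oddsScaling hl).iterate _ (ht₁ i)) (ht₂ i) ?_
    exact (odds_iterate_oddsScaling hl (ht₁ i) _).trans hlw

/-- **Lemma.** Let `(wᵢ)` be positive integers tending to infinity and `(μᵢ)` reals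
greater than `1` tending to `1`. Let `t_{i,1}, t_{i,2} ∈ (0,1)` with
`t_{i,η}/(1 - t_{i,η}) ∈ [μᵢ^{-wᵢ}, μᵢ^{wᵢ}]`. Then for every `ε > 0` there is `i₀`
such that for every `i ≥ i₀` there are `C¹` diffeomorphisms `H_{i,0}, …, H_{i,wᵢ-1}`
of `[0,1]`, each `ε`-`C¹`-close to the identity, with
`H_{i,wᵢ-1} ∘ ⋯ ∘ H_{i,0}(t_{i,1}) = t_{i,2}`. -/
theorem move_ratio_by_small_perturbations
    (w : ℕ → ℕ) (hwpos : ∀ i : ℕ, 0 < w i) (hw : Tendsto w atTop atTop)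
    (μ : ℕ → ℝ) (hμ1 : ∀ i : ℕ, 1 < μ i) (hμ : Tendsto μ atTop (nhds 1))
    (t₁ t₂ : ℕ → ℝ) (ht₁ : ∀ i : ℕ, t₁ i ∈ Set.Ioo (0:ℝ) 1)
    (ht₂ : ∀ i : ℕ, t₂ i ∈ Set.Ioo (0:ℝ) 1)
    (hr₁ : ∀ i : ℕ, t₁ i / (1 - t₁ i) ∈ Set.Icc (μ i ^ (-(w i : ℤ))) (μ i ^ (w i : ℤ)))
    (hr₂ : ∀ i : ℕ, t₂ i / (1 - t₂ i) ∈ Set.Icc (μ i ^ (-(w i : ℤ))) (μ i ^ (w i : ℤ)))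
    (ε : ℝ) (hε : 0 < ε) :
    ∃ i₀ : ℕ, ∀ i : ℕ, i₀ ≤ i → ∃ H : ℕ → ℝ → ℝ,
      (∀ j < w i, IsIntervalDiffeo (H j) 0 1) ∧
      (∀ j < w i, distId (H j) < ε) ∧
      compN H (w i) (t₁ i) = t₂ i :=
  move_ratio_by_small_perturbations_general w μ hμ t₁ t₂ ht₁ ht₂ hr₁ hr₂ ε hε
end

section
/- For every sufficiently small ε > 0, every t ∈ [−1,1] and every y ∈ (0,1), there exists a C¹ diffeomorphism φ of [0,1] that is equal to the identity in a neighborhood of 0 and of 1, is 2ε-C¹-close to the identity, and satisfies φ(y)/(1 − φ(y)) = (1 + tε) · y/(1 − y). -/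
/-!
Take `φ = id + s • β`, where `β` is a `C¹` bump built from two cubic smoothsteps, equal to `1`
at `y`, vanishing outside `(y/10, y + 9(1-y)/10)`, with `|β| ≤ 1` and
`|β'| ≤ 5 / (3 y (1-y))`. Since `φ y = y + s`, the prescribed odds force
`s = tεy(1-y) / (1 + tεy)`, so `|s| ≤ εy(1-y) / (1-ε)`. Then `|φ - id| ≤ |s| ≤ ε / (4(1-ε))`
and `|φ' - 1| ≤ |s| ‖β'‖ ≤ 5ε / (3(1-ε))`; the latter keeps `φ'` positive, and the sum is
`23ε / (12(1-ε)) < 2ε` as soon as `ε < 1/24`.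
-/

open Set Filter
lemma hasDerivAt_comp_max {p p' : ℝ → ℝ} {c : ℝ} (hp : ∀ v, HasDerivAt p (p' v) v)
    (hc : p' c = 0) (u : ℝ) : HasDerivAt (fun w => p (max c w)) (p' (max c u)) u := by
  rcases lt_trichotomy u c with hu | rfl | hu
  · rw [max_eq_left hu.le, hc]
    refine (hasDerivAt_const u (p c)).congr_of_eventuallyEq ?_
    filter_upwards [Iio_mem_nhds hu] with w hw
    rw [max_eq_left hw.le]
  · rw [max_self]
    have hleft : HasDerivWithinAt (fun w => p (max u w)) (p' u) (Iic u) u := by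
      rw [hc]
      exact (hasDerivWithinAt_const u _ (p u)).congr_of_mem
        (fun w hw => by rw [max_eq_left hw]) self_mem_Iic
    have hright : HasDerivWithinAt (fun w => p (max u w)) (p' u) (Ici u) u :=
      (hp u).hasDerivWithinAt.congr_of_mem (fun w hw => by rw [max_eq_right hw]) self_mem_Ici
    simpa only [Iic_union_Ici, hasDerivWithinAt_univ] using hleft.union hright
  · rw [max_eq_right hu.le]
    refine (hp u).congr_of_eventuallyEq ?_
    filter_upwards [Ioi_mem_nhds hu] with w hw
    rw [max_eq_right hw.le]

lemma hasDerivAt_comp_min {p p' : ℝ → ℝ} {c : ℝ} (hp : ∀ v, HasDerivAt p (p' v) v)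
    (hc : p' c = 0) (u : ℝ) : HasDerivAt (fun w => p (min w c)) (p' (min u c)) u := by
  rcases lt_trichotomy u c with hu | rfl | hu
  · rw [min_eq_left hu.le]
    refine (hp u).congr_of_eventuallyEq ?_
    filter_upwards [Iio_mem_nhds hu] with w hw
    rw [min_eq_left hw.le]
  · rw [min_self]
    have hleft : HasDerivWithinAt (fun w => p (min w u)) (p' u) (Iic u) u :=
      (hp u).hasDerivWithinAt.congr_of_mem (fun w hw => by rw [min_eq_left hw]) self_mem_Iic
    have hright : HasDerivWithinAt (fun w => p (min w u)) (p' u) (Ici u) u := by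
      rw [hc]
      exact (hasDerivWithinAt_const u _ (p u)).congr_of_mem
        (fun w hw => by rw [min_eq_right hw]) self_mem_Ici
    simpa only [Iic_union_Ici, hasDerivWithinAt_univ] using hleft.union hright
  · rw [min_eq_right hu.le, hc]
    refine (hasDerivAt_const u (p c)).congr_of_eventuallyEq ?_
    filter_upwards [Ioi_mem_nhds hu] with w hw
    rw [min_eq_right hw.le]

noncomputable def smoothstep (u : ℝ) : ℝ := max 0 (min u 1) ^ 2 * (3 - 2 * max 0 (min u 1))

lemma smoothstep_of_nonpos {u : ℝ} (hu : u ≤ 0) : smoothstep u = 0 := by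
  simp [smoothstep, min_eq_left (hu.trans zero_le_one), max_eq_left hu]

lemma smoothstep_of_one_le {u : ℝ} (hu : 1 ≤ u) : smoothstep u = 1 := by
  norm_num [smoothstep, min_eq_right hu]

lemma abs_smoothstep_le_one (u : ℝ) : |smoothstep u| ≤ 1 := by
  have h0 : 0 ≤ max 0 (min u 1) := le_max_left _ _
  have h1 : max 0 (min u 1) ≤ 1 := max_le zero_le_one (min_le_right _ _)
  rw [abs_le, smoothstep]
  constructor <;> nlinarith [mul_nonneg (mul_nonneg h0 h0) (sub_nonneg.2 h1),
    mul_nonneg (sq_nonneg (1 - max 0 (min u 1))) h0]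

lemma hasDerivAt_smoothstep (u : ℝ) :
    HasDerivAt smoothstep (6 * max 0 (min u 1) * (1 - max 0 (min u 1))) u := by
  have hcubic (v : ℝ) : HasDerivAt (fun v => v ^ 2 * (3 - 2 * v)) (6 * v * (1 - v)) v := by
    refine ((hasDerivAt_pow 2 v).fun_mul
      (((hasDerivAt_id v).const_mul 2).const_sub 3)).congr_deriv ?_
    simp only [id, Nat.cast_ofNat]
    ring
  exact hasDerivAt_comp_min (hasDerivAt_comp_max hcubic (by norm_num)) (by norm_num) u

lemma deriv_smoothstep :
    deriv smoothstep = fun u => 6 * max 0 (min u 1) * (1 - max 0 (min u 1)) :=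
  funext fun u => (hasDerivAt_smoothstep u).deriv

lemma contDiff_smoothstep : ContDiff ℝ 1 smoothstep :=
  contDiff_one_iff_deriv.2 ⟨fun u => (hasDerivAt_smoothstep u).differentiableAt,
    deriv_smoothstep ▸ by fun_prop⟩

lemma abs_deriv_smoothstep_le (u : ℝ) : |deriv smoothstep u| ≤ 3 / 2 := by
  have h0 : 0 ≤ max 0 (min u 1) := le_max_left _ _
  have h1 : max 0 (min u 1) ≤ 1 := max_le zero_le_one (min_le_right _ _)
  rw [deriv_smoothstep, abs_le]
  constructor <;> nlinarith [sq_nonneg (2 * max 0 (min u 1) - 1)]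

/-- Rises from `0` at `c - L` to `1` at `c` and falls back to `0` at `c + R`. -/
noncomputable def bump (c L R z : ℝ) : ℝ :=
  smoothstep ((z - c) / L + 1) * smoothstep ((c - z) / R + 1)

section Bump

variable {c L R : ℝ}

lemma bump_self : bump c L R c = 1 := by
  simp [bump, smoothstep_of_one_le]

lemma bump_of_le_sub (hL : 0 < L) {z : ℝ} (hz : z ≤ c - L) : bump c L R z = 0 := by
  have : (z - c) / L + 1 ≤ 0 := by
    rw [← le_neg_iff_add_nonpos_right, div_le_iff₀ hL]
    linarith
  rw [bump, smoothstep_of_nonpos this, zero_mul]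

lemma bump_of_add_le (hR : 0 < R) {z : ℝ} (hz : c + R ≤ z) : bump c L R z = 0 := by
  have : (c - z) / R + 1 ≤ 0 := by
    rw [← le_neg_iff_add_nonpos_right, div_le_iff₀ hR]
    linarith
  rw [bump, smoothstep_of_nonpos this, mul_zero]

lemma abs_bump_le_one (z : ℝ) : |bump c L R z| ≤ 1 := by
  rw [bump, abs_mul]
  exact mul_le_one₀ (abs_smoothstep_le_one _) (abs_nonneg _) (abs_smoothstep_le_one _)

lemma contDiff_bump : ContDiff ℝ 1 (bump c L R) := by
  have := contDiff_smoothstep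
  unfold bump
  fun_prop

lemma abs_deriv_bump_le (hL : 0 < L) (hR : 0 < R) (z : ℝ) :
    |deriv (bump c L R) z| ≤ 3 / 2 * (1 / L + 1 / R) := by
  have hstep (w : ℝ) : HasDerivAt smoothstep (deriv smoothstep w) w :=
    (contDiff_smoothstep.differentiable one_ne_zero w).hasDerivAt
  have hleft : HasDerivAt (fun z => (z - c) / L + 1) (1 / L) z :=
    (((hasDerivAt_id z).sub_const c).div_const L).add_const 1
  have hright : HasDerivAt (fun z => (c - z) / R + 1) (-1 / R) z :=
    (((hasDerivAt_id z).const_sub c).div_const R).add_const 1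
  set p := (z - c) / L + 1
  set q := (c - z) / R + 1
  have hbump : HasDerivAt (bump c L R) (deriv smoothstep p * (1 / L) * smoothstep q +
      smoothstep p * (deriv smoothstep q * (-1 / R))) z :=
    ((hstep p).comp (h := fun z => (z - c) / L + 1) z hleft).fun_mul
      ((hstep q).comp (h := fun z => (c - z) / R + 1) z hright)
  rw [hbump.deriv]
  calc _ ≤ |deriv smoothstep p| * (1 / L) * |smoothstep q| +
        |smoothstep p| * (|deriv smoothstep q| * (1 / R)) := by
        refine (abs_add_le _ _).trans_eq ?_
        simp only [abs_mul, abs_div, abs_neg, abs_one, abs_of_pos hL, abs_of_pos hR]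
    _ ≤ 3 / 2 * (1 / L) * 1 + 1 * (3 / 2 * (1 / R)) := by
        gcongr
        exacts [abs_deriv_smoothstep_le p, abs_smoothstep_le_one q, abs_smoothstep_le_one p,
          abs_deriv_smoothstep_le q]
    _ = 3 / 2 * (1 / L + 1 / R) := by ring

end Bump

lemma distId_le {g : ℝ → ℝ} {A B : ℝ} (hg : ∀ x ∈ Icc (0 : ℝ) 1, |g x - x| ≤ A)
    (hg' : ∀ x ∈ Icc (0 : ℝ) 1, |derivWithin g (Icc 0 1) x - 1| ≤ B) : distId g ≤ A + B := by
  have : Nonempty (Icc (0 : ℝ) 1) := ⟨⟨0, left_mem_Icc.2 zero_le_one⟩⟩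
  exact add_le_add (ciSup_le fun x => hg x x.2) (ciSup_le fun x => hg' x x.2)

section Perturbation

variable {β : ℝ → ℝ} {s M : ℝ}

lemma hasDerivAt_id_add_mul (hβ : Differentiable ℝ β) (z : ℝ) :
    HasDerivAt (fun z => z + s * β z) (1 + s * deriv β z) z :=
  (hasDerivAt_id z).add ((hβ z).hasDerivAt.const_mul s)

lemma abs_deriv_id_add_mul_sub_one_le (hβ : Differentiable ℝ β) (hβ' : ∀ z, |deriv β z| ≤ M)
    (z : ℝ) : |deriv (fun z => z + s * β z) z - 1| ≤ |s| * M := by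
  rw [(hasDerivAt_id_add_mul hβ z).deriv, add_sub_cancel_left, abs_mul]
  exact mul_le_mul_of_nonneg_left (hβ' z) (abs_nonneg s)

lemma derivWithin_Icc_id_add_mul {u v : ℝ} (huv : u < v) (hβ : Differentiable ℝ β) {z : ℝ}
    (hz : z ∈ Icc u v) :
    derivWithin (fun z => z + s * β z) (Icc u v) z = deriv (fun z => z + s * β z) z :=
  (hasDerivAt_id_add_mul hβ z).differentiableAt.derivWithin (uniqueDiffOn_Icc huv z hz)

lemma isIntervalDiffeo_id_add_mul {u v : ℝ} (huv : u < v) (hβ : ContDiff ℝ 1 β)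
    (hu : β u = 0) (hv : β v = 0) (hβ' : ∀ z, |deriv β z| ≤ M) (hsM : |s| * M < 1) :
    IsIntervalDiffeo (fun z => z + s * β z) u v := by
  have hβd := hβ.differentiable one_ne_zero
  have hpos (z : ℝ) : 0 < deriv (fun z => z + s * β z) z := by
    have := abs_sub_lt_iff.1 ((abs_deriv_id_add_mul_sub_one_le hβd hβ' z).trans_lt hsM)
    linarith
  refine ⟨(contDiff_id.add (contDiff_const.mul hβ)).contDiffOn, by simp [hu], by simp [hv],
    strictMonoOn_of_deriv_pos (convex_Icc u v) ?_ fun z _ => hpos z, fun z hz => ?_⟩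
  · exact (continuous_id.add (continuous_const.mul hβ.continuous)).continuousOn
  · exact derivWithin_Icc_id_add_mul huv hβd hz ▸ hpos z

lemma distId_id_add_mul_le (hβ : Differentiable ℝ β) (hβ1 : ∀ z, |β z| ≤ 1)
    (hβ' : ∀ z, |deriv β z| ≤ M) : distId (fun z => z + s * β z) ≤ |s| + |s| * M := by
  refine distId_le (fun x _ => ?_) fun x hx => ?_
  · rw [add_sub_cancel_left, abs_mul]
    exact mul_le_of_le_one_right (abs_nonneg s) (hβ1 x)
  · rw [derivWithin_Icc_id_add_mul zero_lt_one hβ hx]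
    exact abs_deriv_id_add_mul_sub_one_le hβ hβ' x

end Perturbation

lemma shift_div_one_sub_shift {y r : ℝ} (hr : 1 + r * y ≠ 0) :
    (y + r * y * (1 - y) / (1 + r * y)) / (1 - (y + r * y * (1 - y) / (1 + r * y))) =
      (1 + r) * (y / (1 - y)) := by
  have hshift : y + r * y * (1 - y) / (1 + r * y) = (1 + r) * y / (1 + r * y) := by
    rw [eq_div_iff hr, add_mul, div_mul_cancel₀ _ hr]
    ring
  have hcompl : 1 - (1 + r) * y / (1 + r * y) = (1 - y) / (1 + r * y) := by
    rw [eq_div_iff hr, sub_mul, div_mul_cancel₀ _ hr]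
    ring
  rw [hshift, hcompl, div_div_div_cancel_right₀ hr, mul_div_assoc]

lemma one_sub_le_one_add_mul {ε t y : ℝ} (hε : 0 ≤ ε) (ht : t ∈ Icc (-1) 1) (hy₀ : 0 ≤ y)
    (hy₁ : y ≤ 1) : 1 - ε ≤ 1 + t * ε * y := by
  have hty : |t * y| ≤ 1 := by
    rw [abs_mul, abs_of_nonneg hy₀]
    exact mul_le_one₀ (abs_le.2 ht) hy₀ hy₁
  nlinarith [neg_le_of_abs_le hty]

lemma abs_shift_mul_one_sub_le {ε t y : ℝ} (hε : 0 < ε) (hε₁ : ε < 1) (ht : t ∈ Icc (-1) 1)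
    (hy₀ : 0 < y) (hy₁ : y < 1) :
    |t * ε * y * (1 - y) / (1 + t * ε * y)| * (1 - ε) ≤ ε * (y * (1 - y)) := by
  have hd := one_sub_le_one_add_mul hε.le ht hy₀.le hy₁.le
  have hd₀ : 0 < 1 + t * ε * y := by linarith
  calc _ ≤ |t * ε * y * (1 - y) / (1 + t * ε * y)| * (1 + t * ε * y) := by gcongr
    _ = |t| * (ε * (y * (1 - y))) := by
      rw [abs_div, abs_of_pos hd₀, div_mul_cancel₀ _ hd₀.ne',
        show t * ε * y * (1 - y) = t * (ε * (y * (1 - y))) by ring, abs_mul,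
        abs_of_pos (mul_pos hε (mul_pos hy₀ (sub_pos.2 hy₁)))]
    _ ≤ ε * (y * (1 - y)) := mul_le_of_le_one_left (by positivity) (abs_le.2 ht)

/-- **Lemma.** For every sufficiently small `ε > 0`, every `t ∈ [-1,1]` and every
`y ∈ (0,1)`, there is a `C¹` diffeomorphism `φ` of `[0,1]`, equal to the identity in a
neighborhood of `0` and of `1`, which is `2ε`-`C¹`-close to the identity, and satisfies
`φ(y)/(1 - φ(y)) = (1 + tε) · y/(1 - y)`. -/
theorem one_step_ratio_perturbation :
    ∃ ε₀ : ℝ, 0 < ε₀ ∧ ∀ ε : ℝ, 0 < ε → ε < ε₀ →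
      ∀ t ∈ Set.Icc (-1 : ℝ) 1, ∀ y ∈ Set.Ioo (0:ℝ) 1,
        ∃ φ : ℝ → ℝ, IsIntervalDiffeo φ 0 1 ∧
          (∃ δ : ℝ, 0 < δ ∧ (∀ z ∈ Set.Icc (0:ℝ) δ, φ z = z) ∧
            (∀ z ∈ Set.Icc (1 - δ) 1, φ z = z)) ∧
          distId φ < 2 * ε ∧
          φ y / (1 - φ y) = (1 + t * ε) * (y / (1 - y)) := by
  refine ⟨1 / 24, by norm_num, fun ε hε hε₀ t ht y hy => ?_⟩
  obtain ⟨hy₀, hy₁⟩ := hy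
  set L := 9 / 10 * y with hL_def
  set R := 9 / 10 * (1 - y) with hR_def
  have hL : 0 < L := by positivity
  have hR : 0 < R := by linarith
  set M := 3 / 2 * (1 / L + 1 / R)
  have hβ' : ∀ z, |deriv (bump y L R) z| ≤ M := abs_deriv_bump_le hL hR
  have hM : M * (y * (1 - y)) = 5 / 3 := by
    simp only [M, L, R]
    field_simp
    ring
  have hs := abs_shift_mul_one_sub_le hε (by linarith) ht hy₀ hy₁
  set s := t * ε * y * (1 - y) / (1 + t * ε * y)
  have hfix {z : ℝ} (hz : z ≤ y - L ∨ y + R ≤ z) : z + s * bump y L R z = z := by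
    rcases hz with hz | hz
    · rw [bump_of_le_sub hL hz, mul_zero, add_zero]
    · rw [bump_of_add_le hR hz, mul_zero, add_zero]
  refine ⟨fun z => z + s * bump y L R z,
    isIntervalDiffeo_id_add_mul one_pos contDiff_bump
      (bump_of_le_sub hL (by linarith)) (bump_of_add_le hR (by linarith)) hβ' ?_,
    ⟨min (y / 10) ((1 - y) / 10), by positivity, fun z hz => ?_, fun z hz => ?_⟩,
    (distId_id_add_mul_le (contDiff_bump.differentiable one_ne_zero) abs_bump_le_one
      hβ').trans_lt ?_, ?_⟩
  · nlinarith [mul_le_mul_of_nonneg_right hs (by positivity : 0 ≤ M)]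
  · exact hfix (Or.inl (by linarith [hz.2, min_le_left (y / 10) ((1 - y) / 10)]))
  · exact hfix (Or.inr (by linarith [hz.1, min_le_right (y / 10) ((1 - y) / 10)]))
  · nlinarith [mul_le_mul_of_nonneg_right hs (by positivity : 0 ≤ 1 + M), sq_nonneg (y - 1 / 2)]
  · simp only [bump_self, mul_one]
    exact shift_div_one_sub_shift
      (by linarith [one_sub_le_one_add_mul hε.le ht hy₀.le hy₁.le])
end
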